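/- (Barrier comparison) Let F_{s,β}(x,t) = (t+1)^{−s} e^{−|x|²/(4β(t+1))} with a_0 ≤ a(x,t) ≤ β and s ≤ a_0 d/(2β). Suppose v ∈ C^{2,1} is a bounded function on ℝᵈ × [0,T] with ∂v/∂t − a Δv ≤ 0, and v(x,0) ≤ F_{s,β}(x,0) for all x. Then v(x,t) ≤ F_{s,β}(x,t) for all (x,t) ∈ ℝᵈ × [0,T]. -/

import Mathlib

/-!
Penalize: for `ε > 0` put `Φ = F + ε (‖x‖² + (2dβ + 1) t)`. The Gaussian `F` is a supersolution
of `∂ₜ - a Δ` exactly because `a ≤ β` and `s ≤ a d / (2β)`, and the penalty makes `Φ` a strict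
one. If `v - Φ` were positive somewhere, it would attain a positive maximum on `ℝᵈ × [0, T]`
(`v` is bounded, the penalty is coercive), at a time `τ > 0` (since `v ≤ F` at `t = 0`). There
`∂ₜ(v - Φ) ≥ 0` and `Δ(v - Φ) ≤ 0`, so `∂ₜΦ - a ΔΦ ≤ ∂ₜv - a Δv ≤ 0`, a contradiction.
Hence `v ≤ Φ`, and `ε → 0` gives `v ≤ F`.
-/

noncomputable def pd {d : ℕ} (f : EuclideanSpace ℝ (Fin d) → ℝ) (i : Fin d)
    (x : EuclideanSpace ℝ (Fin d)) : ℝ :=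
  fderiv ℝ f x (EuclideanSpace.single i 1)

noncomputable def lap {d : ℕ} (f : EuclideanSpace ℝ (Fin d) → ℝ)
    (x : EuclideanSpace ℝ (Fin d)) : ℝ :=
  ∑ i : Fin d, pd (fun y => pd f i y) i x

noncomputable def gradSq {d : ℕ} (f : EuclideanSpace ℝ (Fin d) → ℝ)
    (x : EuclideanSpace ℝ (Fin d)) : ℝ :=
  ∑ i : Fin d, (pd f i x) ^ 2

noncomputable def dt {d : ℕ} (f : EuclideanSpace ℝ (Fin d) → ℝ → ℝ)
    (x : EuclideanSpace ℝ (Fin d)) (t : ℝ) : ℝ :=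
  deriv (fun s => f x s) t

open Real Set Filter Topology

theorem IsLocalMax.deriv_deriv_nonpos {f : ℝ → ℝ} {x : ℝ} (h : IsLocalMax f x)
    (hc : ContinuousAt f x) : deriv (deriv f) x ≤ 0 := by
  by_contra! hpos
  -- the second derivative test would make `x` also a local minimum, so `f` is locally constant
  have hmin := isLocalMin_of_deriv_deriv_pos hpos h.deriv_eq_zero hc
  have hconst : f =ᶠ[𝓝 x] fun _ => f x :=
    (hmin.and h).mono fun y hy => le_antisymm hy.2 hy.1
  have hderiv : deriv f =ᶠ[𝓝 x] fun _ => 0 :=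
    hconst.eventuallyEq_nhds.mono fun y hy => by rw [hy.deriv_eq, deriv_const]
  simp [hderiv.deriv_eq] at hpos

theorem HasDerivAt.nonneg_of_isMaxOn_Icc {g : ℝ → ℝ} {g' a b : ℝ} (hab : a < b)
    (hg : HasDerivAt g g' b) (hmax : IsMaxOn g (Icc a b) b) : 0 ≤ g' := by
  have hcone : a - b ∈ posTangentConeAt (Icc a b) b :=
    sub_mem_posTangentConeAt_of_segment_subset
      ((convex_Icc a b).segment_subset (right_mem_Icc.2 hab.le) (left_mem_Icc.2 hab.le))
  have := hmax.localize.hasFDerivWithinAt_nonpos hg.hasDerivWithinAt.hasFDerivWithinAt hcone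
  rw [ContinuousLinearMap.toSpanSingleton_apply, smul_eq_mul] at this
  exact nonneg_of_mul_nonpos_right this (sub_neg.2 hab)

theorem hasFDerivAt_comp_norm_sq {F : Type*} [NormedAddCommGroup F] [InnerProductSpace ℝ F]
    {g : ℝ → ℝ} {g' : ℝ} (x : F) (hg : HasDerivAt g g' (‖x‖ ^ 2)) :
    HasFDerivAt (fun y => g (‖y‖ ^ 2)) (g' • 2 • innerSL ℝ x) x :=
  hg.comp_hasFDerivAt x (hasStrictFDerivAt_norm_sq x).hasFDerivAt

theorem exists_isMaxOn_univ_prod_Icc {E : Type*} [NormedAddCommGroup E] [ProperSpace E]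
    {w : E × ℝ → ℝ} {a b R : ℝ} (hw : ContinuousOn w (univ ×ˢ Icc a b))
    (hfar : ∀ p ∈ univ ×ˢ Icc a b, R < ‖p.1‖ → w p ≤ 0)
    {p₀ : E × ℝ} (hp₀ : p₀ ∈ univ ×ˢ Icc a b) (hpos : 0 < w p₀) :
    ∃ q ∈ univ ×ˢ Icc a b, IsMaxOn w (univ ×ˢ Icc a b) q := by
  refine hw.exists_isMaxOn' (isClosed_univ.prod isClosed_Icc) hp₀ ?_
  rw [Filter.Eventually, mem_inf_principal, mem_cocompact]
  refine ⟨Metric.closedBall 0 R ×ˢ Icc a b, (isCompact_closedBall 0 R).prod isCompact_Icc,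
    fun p hpK hp => (hfar p hp ?_).trans hpos.le⟩
  by_contra! hle
  exact hpK ⟨mem_closedBall_zero_iff.2 hle, hp.2⟩

section Laplacian

variable {d : ℕ}

theorem pd_eq_of_hasFDerivAt {f : EuclideanSpace ℝ (Fin d) → ℝ}
    {f' : EuclideanSpace ℝ (Fin d) →L[ℝ] ℝ} {x : EuclideanSpace ℝ (Fin d)}
    (hf : HasFDerivAt f f' x) (i : Fin d) : pd f i x = f' (EuclideanSpace.single i 1) := by
  rw [pd, hf.fderiv]

theorem hasDerivAt_pd_line {f : EuclideanSpace ℝ (Fin d) → ℝ} (y : EuclideanSpace ℝ (Fin d))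
    (i : Fin d) (σ : ℝ) (hf : DifferentiableAt ℝ f (y + σ • EuclideanSpace.single i 1)) :
    HasDerivAt (fun τ : ℝ => f (y + τ • EuclideanSpace.single i 1))
      (pd f i (y + σ • EuclideanSpace.single i 1)) σ :=
  hf.hasFDerivAt.comp_hasDerivAt σ (((hasDerivAt_id σ).smul_const _).const_add y |>.congr_deriv
    (one_smul ℝ _))

theorem contDiff_pd {f : EuclideanSpace ℝ (Fin d) → ℝ} (hf : ContDiff ℝ 2 f) (i : Fin d) :
    ContDiff ℝ 1 (pd f i) :=
  (hf.fderiv_right (m := 1) (by norm_num)).clm_apply contDiff_const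

theorem pd_comp_norm_sq {g g' : ℝ → ℝ} (hg : ∀ r, HasDerivAt g (g' r) r) (i : Fin d)
    (x : EuclideanSpace ℝ (Fin d)) :
    pd (fun y => g (‖y‖ ^ 2)) i x = g' (‖x‖ ^ 2) * (2 * x i) := by
  rw [pd_eq_of_hasFDerivAt (hasFDerivAt_comp_norm_sq x (hg _))]
  simp [EuclideanSpace.inner_single_right]

theorem lap_comp_norm_sq {g g' g'' : ℝ → ℝ} (hg : ∀ r, HasDerivAt g (g' r) r)
    (hg' : ∀ r, HasDerivAt g' (g'' r) r) (x : EuclideanSpace ℝ (Fin d)) :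
    lap (fun y => g (‖y‖ ^ 2)) x = 4 * ‖x‖ ^ 2 * g'' (‖x‖ ^ 2) + 2 * d * g' (‖x‖ ^ 2) := by
  have hpd2 (i : Fin d) : pd (fun y => pd (fun y => g (‖y‖ ^ 2)) i y) i x
      = 4 * x i ^ 2 * g'' (‖x‖ ^ 2) + 2 * g' (‖x‖ ^ 2) := by
    simp only [pd_comp_norm_sq hg]
    have hproj : HasFDerivAt (fun y : EuclideanSpace ℝ (Fin d) => (2 : ℝ) * y i)
        ((2 : ℝ) • EuclideanSpace.proj i) x :=
      (EuclideanSpace.proj (𝕜 := ℝ) i).hasFDerivAt.const_mul (2 : ℝ)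
    rw [pd_eq_of_hasFDerivAt ((hasFDerivAt_comp_norm_sq x (hg' _)).fun_mul hproj)]
    simp [EuclideanSpace.inner_single_right]
    ring
  rw [lap, Finset.sum_congr rfl fun i _ => hpd2 i, Finset.sum_add_distrib, ← Finset.sum_mul,
    ← Finset.mul_sum, EuclideanSpace.real_norm_sq_eq]
  simp
  ring

variable {f g : EuclideanSpace ℝ (Fin d) → ℝ}

theorem pd_add {x : EuclideanSpace ℝ (Fin d)} (hf : DifferentiableAt ℝ f x)
    (hg : DifferentiableAt ℝ g x) (i : Fin d) :
    pd (fun y => f y + g y) i x = pd f i x + pd g i x := by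
  simp [pd, fderiv_fun_add hf hg]

theorem pd_sub {x : EuclideanSpace ℝ (Fin d)} (hf : DifferentiableAt ℝ f x)
    (hg : DifferentiableAt ℝ g x) (i : Fin d) :
    pd (fun y => f y - g y) i x = pd f i x - pd g i x := by
  simp [pd, fderiv_fun_sub hf hg]

theorem lap_add (hf : ContDiff ℝ 2 f) (hg : ContDiff ℝ 2 g) (x : EuclideanSpace ℝ (Fin d)) :
    lap (fun y => f y + g y) x = lap f x + lap g x := by
  simp only [lap, pd_add (hf.differentiable two_ne_zero _) (hg.differentiable two_ne_zero _)]
  rw [← Finset.sum_add_distrib]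
  exact Finset.sum_congr rfl fun i _ => pd_add ((contDiff_pd hf i).differentiable one_ne_zero _)
    ((contDiff_pd hg i).differentiable one_ne_zero _) i

theorem lap_sub (hf : ContDiff ℝ 2 f) (hg : ContDiff ℝ 2 g) (x : EuclideanSpace ℝ (Fin d)) :
    lap (fun y => f y - g y) x = lap f x - lap g x := by
  simp only [lap, pd_sub (hf.differentiable two_ne_zero _) (hg.differentiable two_ne_zero _)]
  rw [← Finset.sum_sub_distrib]
  exact Finset.sum_congr rfl fun i _ => pd_sub ((contDiff_pd hf i).differentiable one_ne_zero _)
    ((contDiff_pd hg i).differentiable one_ne_zero _) i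

theorem lap_nonpos_of_isLocalMax {y : EuclideanSpace ℝ (Fin d)} (hf : ContDiff ℝ 2 f)
    (hmax : IsLocalMax f y) : lap f y ≤ 0 := by
  refine Finset.sum_nonpos fun i _ => ?_
  set φ : ℝ → ℝ := fun σ => f (y + σ • EuclideanSpace.single i 1)
  have hφ' : deriv φ = fun σ => pd f i (y + σ • EuclideanSpace.single i 1) :=
    funext fun σ => (hasDerivAt_pd_line y i σ (hf.differentiable two_ne_zero _)).deriv
  have hφ'' : deriv (deriv φ) 0 = pd (pd f i) i y := by
    rw [hφ']
    simpa using (hasDerivAt_pd_line y i 0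
      ((contDiff_pd hf i).differentiable one_ne_zero _)).deriv
  have hφmax : IsLocalMax φ 0 :=
    IsLocalMax.comp_continuous (by simpa using hmax) (by fun_prop)
  rw [← hφ'']
  exact hφmax.deriv_deriv_nonpos (hf.continuous.comp (by fun_prop)).continuousAt

end Laplacian

section MaximumPrinciple

variable {d : ℕ}

theorem dt_sub_mul_lap_le_of_isMax {v Φ : EuclideanSpace ℝ (Fin d) → ℝ → ℝ}
    {y : EuclideanSpace ℝ (Fin d)} {t₀ τ a : ℝ} (hτ : t₀ < τ) (ha : 0 ≤ a)
    (hv : ContDiff ℝ 2 (fun x => v x τ)) (hΦ : ContDiff ℝ 2 (fun x => Φ x τ))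
    (hvt : DifferentiableAt ℝ (fun t => v y t) τ) (hΦt : DifferentiableAt ℝ (fun t => Φ y t) τ)
    (hmax_space : IsLocalMax (fun x => v x τ - Φ x τ) y)
    (hmax_time : IsMaxOn (fun t => v y t - Φ y t) (Icc t₀ τ) τ) :
    dt Φ y τ - a * lap (fun x => Φ x τ) y ≤ dt v y τ - a * lap (fun x => v x τ) y := by
  have htime : 0 ≤ dt v y τ - dt Φ y τ :=
    (hvt.hasDerivAt.sub hΦt.hasDerivAt).nonneg_of_isMaxOn_Icc hτ hmax_time
  have hspace : lap (fun x => v x τ) y - lap (fun x => Φ x τ) y ≤ 0 :=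
    lap_sub hv hΦ y ▸ lap_nonpos_of_isLocalMax (hv.sub hΦ) hmax_space
  nlinarith

theorem le_of_strict_supersolution {T R : ℝ} {a v Φ : EuclideanSpace ℝ (Fin d) → ℝ → ℝ}
    (hcont : ContinuousOn (fun p : EuclideanSpace ℝ (Fin d) × ℝ => v p.1 p.2 - Φ p.1 p.2)
      (univ ×ˢ Icc 0 T))
    (hv : ∀ t ∈ Ioc 0 T, ContDiff ℝ 2 (fun x => v x t))
    (hΦ : ∀ t ∈ Ioc 0 T, ContDiff ℝ 2 (fun x => Φ x t))
    (hvt : ∀ x, ∀ t ∈ Ioc 0 T, DifferentiableAt ℝ (fun t => v x t) t)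
    (hΦt : ∀ x, ∀ t ∈ Ioc 0 T, DifferentiableAt ℝ (fun t => Φ x t) t)
    (ha : ∀ x, ∀ t ∈ Ioc 0 T, 0 ≤ a x t)
    (hsub : ∀ x, ∀ t ∈ Ioc 0 T, dt v x t - a x t * lap (fun y => v y t) x ≤ 0)
    (hsuper : ∀ x, ∀ t ∈ Ioc 0 T, 0 < dt Φ x t - a x t * lap (fun y => Φ y t) x)
    (hinit : ∀ x, v x 0 ≤ Φ x 0) (hfar : ∀ x, ∀ t ∈ Icc 0 T, R < ‖x‖ → v x t ≤ Φ x t) :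
    ∀ x, ∀ t ∈ Icc 0 T, v x t ≤ Φ x t := by
  by_contra! ⟨x₀, t₀, ht₀, hlt⟩
  obtain ⟨⟨y, τ⟩, ⟨-, hτ⟩, hmax⟩ := exists_isMaxOn_univ_prod_Icc hcont
    (fun p hp hR => sub_nonpos.2 (hfar p.1 p.2 hp.2 hR)) (p₀ := (x₀, t₀)) ⟨mem_univ x₀, ht₀⟩
    (sub_pos.2 hlt)
  have hpos : 0 < v y τ - Φ y τ :=
    (sub_pos.2 hlt).trans_le (hmax (a := (x₀, t₀)) ⟨mem_univ x₀, ht₀⟩)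
  have hτ' : τ ∈ Ioc 0 T := ⟨hτ.1.lt_of_ne fun h => by linarith [h ▸ hinit y], hτ.2⟩
  have hcompare := dt_sub_mul_lap_le_of_isMax hτ'.1 (ha y τ hτ') (hv τ hτ') (hΦ τ hτ')
    (hvt y τ hτ') (hΦt y τ hτ')
    (IsMaxOn.isLocalMax (fun x _ => hmax (a := (x, τ)) ⟨mem_univ x, hτ⟩) univ_mem)
    (fun t ht => hmax (a := (y, t)) ⟨mem_univ y, ht.1, ht.2.trans hτ.2⟩)
  linarith [hsub y τ hτ', hsuper y τ hτ']

end MaximumPrinciple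

section GaussianBarrier

variable {d : ℕ} {s β : ℝ}

noncomputable def gaussianBarrier (s β : ℝ) (x : EuclideanSpace ℝ (Fin d)) (t : ℝ) : ℝ :=
  (t + 1) ^ (-s) * exp (-‖x‖ ^ 2 / (4 * β * (t + 1)))

theorem gaussianBarrier_nonneg {t : ℝ} (ht : -1 ≤ t) (x : EuclideanSpace ℝ (Fin d)) :
    0 ≤ gaussianBarrier s β x t :=
  mul_nonneg (rpow_nonneg (by linarith) _) (exp_nonneg _)

theorem continuousOn_gaussianBarrier (hβ : β ≠ 0) :
    ContinuousOn (fun p : EuclideanSpace ℝ (Fin d) × ℝ => gaussianBarrier s β p.1 p.2)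
      (univ ×ˢ Ioi (-1)) := by
  have hpos : ∀ p ∈ (univ ×ˢ Ioi (-1) : Set (EuclideanSpace ℝ (Fin d) × ℝ)), 0 < p.2 + 1 :=
    fun p hp => neg_lt_iff_pos_add.1 hp.2
  refine ContinuousOn.mul ?_ ?_
  · exact (continuous_snd.add continuous_const).continuousOn.rpow_const
      fun p hp => Or.inl (hpos p hp).ne'
  · refine continuous_exp.comp_continuousOn (ContinuousOn.div (by fun_prop) (by fun_prop) ?_)
    exact fun p hp => mul_ne_zero (mul_ne_zero four_ne_zero hβ) (hpos p hp).ne'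

theorem contDiff_gaussianBarrier {n : WithTop ℕ∞} (t : ℝ) :
    ContDiff ℝ n (fun x : EuclideanSpace ℝ (Fin d) => gaussianBarrier s β x t) :=
  contDiff_const.mul ((contDiff_norm_sq ℝ).neg.div_const _).exp

theorem hasDerivAt_gaussianBarrier_time (x : EuclideanSpace ℝ (Fin d)) {t : ℝ} (ht : -1 < t) :
    HasDerivAt (gaussianBarrier s β x)
      (gaussianBarrier s β x t * (‖x‖ ^ 2 / (4 * β * (t + 1) ^ 2) - s / (t + 1))) t := by
  have hu : t + 1 ≠ 0 := (neg_lt_iff_pos_add.1 ht).ne'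
  have hlin : HasDerivAt (fun t : ℝ => t + 1) 1 t := (hasDerivAt_id t).add_const 1
  have hexponent : HasDerivAt (fun t : ℝ => -‖x‖ ^ 2 / (4 * β * (t + 1)))
      (‖x‖ ^ 2 / (4 * β * (t + 1) ^ 2)) t := by
    have hfun : (fun t : ℝ => -‖x‖ ^ 2 / (4 * β * (t + 1)))
        = fun t => -‖x‖ ^ 2 / (4 * β) * (t + 1)⁻¹ := by
      funext τ
      rw [div_mul_eq_div_div, div_eq_mul_inv]
    rw [hfun]
    exact ((hlin.inv hu).const_mul _).congr_deriv (by field_simp)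
  refine ((hlin.rpow_const (p := -s) (Or.inl hu)).mul hexponent.exp).congr_deriv ?_
  rw [gaussianBarrier, rpow_sub_one hu]
  field_simp
  ring

theorem lap_gaussianBarrier (x : EuclideanSpace ℝ (Fin d)) (t : ℝ) :
    lap (fun y => gaussianBarrier s β y t) x
      = gaussianBarrier s β x t
        * (4 * ‖x‖ ^ 2 / (4 * β * (t + 1)) ^ 2 - 2 * d / (4 * β * (t + 1))) := by
  have hg (r : ℝ) : HasDerivAt (fun r => (t + 1) ^ (-s) * exp (-r / (4 * β * (t + 1))))
      ((t + 1) ^ (-s) * (exp (-r / (4 * β * (t + 1))) * (-1 / (4 * β * (t + 1))))) r :=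
    ((hasDerivAt_neg r).div_const _).exp.const_mul _
  have hg' (r : ℝ) : HasDerivAt
      (fun r => (t + 1) ^ (-s) * (exp (-r / (4 * β * (t + 1))) * (-1 / (4 * β * (t + 1)))))
      ((t + 1) ^ (-s) * (exp (-r / (4 * β * (t + 1))) * (-1 / (4 * β * (t + 1)))
        * (-1 / (4 * β * (t + 1))))) r :=
    (((hasDerivAt_neg r).div_const _).exp.mul_const _).const_mul _
  have h := lap_comp_norm_sq hg hg' x
  beta_reduce at h
  simp only [gaussianBarrier, h]
  generalize 4 * β * (t + 1) = D
  ring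

theorem dt_sub_mul_lap_gaussianBarrier_nonneg {a t : ℝ} (hβ : 0 < β) (ht : -1 < t)
    (haβ : a ≤ β) (hs : s ≤ a * d / (2 * β)) (x : EuclideanSpace ℝ (Fin d)) :
    0 ≤ dt (gaussianBarrier s β) x t - a * lap (fun y => gaussianBarrier s β y t) x := by
  have hu : 0 < t + 1 := neg_lt_iff_pos_add.1 ht
  have hs' : 2 * β * s ≤ a * d := by rw [le_div_iff₀ (by positivity)] at hs; linarith
  have hfactor : ‖x‖ ^ 2 / (4 * β * (t + 1) ^ 2) - s / (t + 1)
      - a * (4 * ‖x‖ ^ 2 / (4 * β * (t + 1)) ^ 2 - 2 * d / (4 * β * (t + 1)))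
      = (‖x‖ ^ 2 * (β - a) + 2 * β * (t + 1) * (a * d - 2 * β * s))
        / (4 * β ^ 2 * (t + 1) ^ 2) := by
    field_simp
    ring
  have hnum : 0 ≤ ‖x‖ ^ 2 * (β - a) + 2 * β * (t + 1) * (a * d - 2 * β * s) := by
    have : 0 ≤ a * d - 2 * β * s := by linarith
    have : 0 ≤ β - a := by linarith
    positivity
  rw [dt, (hasDerivAt_gaussianBarrier_time x ht).deriv, lap_gaussianBarrier]
  calc 0 ≤ gaussianBarrier s β x t * ((‖x‖ ^ 2 * (β - a) + 2 * β * (t + 1) * (a * d - 2 * β * s))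
        / (4 * β ^ 2 * (t + 1) ^ 2)) :=
      mul_nonneg (gaussianBarrier_nonneg ht.le x) (div_nonneg hnum (by positivity))
    _ = _ := by rw [← hfactor]; ring

end GaussianBarrier

section PenalizedBarrier

variable {d : ℕ} {s β ε t : ℝ}

/-- The penalty `ε ‖x‖²` is coercive, and the rate `2dβ + 1` exceeds `a Δ‖x‖² = 2da` for every
`a ≤ β`, which makes the penalized barrier a strict supersolution. -/
noncomputable def penalizedBarrier (s β ε : ℝ) (x : EuclideanSpace ℝ (Fin d)) (t : ℝ) : ℝ :=
  gaussianBarrier s β x t + ε * (‖x‖ ^ 2 + (2 * d * β + 1) * t)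

theorem contDiff_penalizedBarrier (t : ℝ) :
    ContDiff ℝ 2 (fun x : EuclideanSpace ℝ (Fin d) => penalizedBarrier s β ε x t) :=
  (contDiff_gaussianBarrier t).add (contDiff_const.mul ((contDiff_norm_sq ℝ).add contDiff_const))

theorem continuousOn_penalizedBarrier (hβ : β ≠ 0) :
    ContinuousOn (fun p : EuclideanSpace ℝ (Fin d) × ℝ => penalizedBarrier s β ε p.1 p.2)
      (univ ×ˢ Ioi (-1)) :=
  (continuousOn_gaussianBarrier hβ).add (by fun_prop)

theorem hasDerivAt_penalizedBarrier_time (x : EuclideanSpace ℝ (Fin d)) (ht : -1 < t) :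
    HasDerivAt (penalizedBarrier s β ε x)
      (dt (gaussianBarrier s β) x t + ε * (2 * d * β + 1)) t := by
  rw [dt, (hasDerivAt_gaussianBarrier_time x ht).deriv]
  exact (hasDerivAt_gaussianBarrier_time x ht).add
    ((((hasDerivAt_id t).const_mul _).const_add _).const_mul ε |>.congr_deriv (by ring))

theorem lap_penalizedBarrier (x : EuclideanSpace ℝ (Fin d)) (t : ℝ) :
    lap (fun y => penalizedBarrier s β ε y t) x
      = lap (fun y => gaussianBarrier s β y t) x + 2 * d * ε := by
  have hg (r : ℝ) : HasDerivAt (fun r => ε * (r + (2 * d * β + 1) * t)) ε r := by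
    simpa using ((hasDerivAt_id r).add_const _).const_mul ε
  have hpenalty := lap_comp_norm_sq hg (fun r => hasDerivAt_const r ε) x
  simp only [penalizedBarrier]
  rw [lap_add (contDiff_gaussianBarrier t)
    (contDiff_const.mul ((contDiff_norm_sq ℝ).add contDiff_const)), hpenalty]
  ring

theorem dt_sub_mul_lap_penalizedBarrier_pos {a : ℝ} (hβ : 0 < β) (hε : 0 < ε) (ht : -1 < t)
    (haβ : a ≤ β) (hs : s ≤ a * d / (2 * β)) (x : EuclideanSpace ℝ (Fin d)) :
    0 < dt (penalizedBarrier s β ε) x t - a * lap (fun y => penalizedBarrier s β ε y t) x := by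
  have hbarrier := dt_sub_mul_lap_gaussianBarrier_nonneg hβ ht haβ hs x
  have hpenalty : 0 ≤ 2 * d * ε * (β - a) := by
    have := sub_nonneg.2 haβ
    positivity
  rw [dt, (hasDerivAt_penalizedBarrier_time x ht).deriv, lap_penalizedBarrier]
  nlinarith

theorem gaussianBarrier_le_penalizedBarrier (hβ : 0 ≤ β) (hε : 0 ≤ ε) (ht : 0 ≤ t)
    (x : EuclideanSpace ℝ (Fin d)) : gaussianBarrier s β x t ≤ penalizedBarrier s β ε x t :=
  le_add_of_nonneg_right (by positivity)

theorem lt_penalizedBarrier_of_sqrt_lt_norm {M : ℝ} (hβ : 0 ≤ β) (hε : 0 < ε) (ht : 0 ≤ t)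
    {x : EuclideanSpace ℝ (Fin d)} (hx : sqrt (M / ε) < ‖x‖) : M < penalizedBarrier s β ε x t := by
  have hM : M < ε * ‖x‖ ^ 2 := by
    rwa [← div_lt_iff₀' hε, ← sqrt_lt' ((sqrt_nonneg _).trans_lt hx)]
  have := gaussianBarrier_nonneg (s := s) (β := β) (show -1 ≤ t by linarith) x
  rw [penalizedBarrier]
  nlinarith [mul_nonneg hε.le (mul_nonneg (by positivity : (0 : ℝ) ≤ 2 * d * β + 1) ht)]

theorem tendsto_penalizedBarrier (x : EuclideanSpace ℝ (Fin d)) (t : ℝ) :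
    Tendsto (fun ε => penalizedBarrier s β ε x t) (𝓝 0) (𝓝 (gaussianBarrier s β x t)) := by
  have hcont : Continuous fun ε => penalizedBarrier s β ε x t := by
    unfold penalizedBarrier
    fun_prop
  simpa [penalizedBarrier] using hcont.tendsto 0

end PenalizedBarrier

theorem stmt_11_general (d : ℕ) (T : ℝ)
    (s β : ℝ) (hβ : 0 < β)
    (F : EuclideanSpace ℝ (Fin d) → ℝ → ℝ)
    (hF : ∀ x t, F x t = (t + 1) ^ (-s) * Real.exp (-‖x‖ ^ 2 / (4 * β * (t + 1))))
    (a : EuclideanSpace ℝ (Fin d) → ℝ → ℝ) (a0 : ℝ) (ha0 : 0 < a0)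
    (ha : ∀ (x : EuclideanSpace ℝ (Fin d)) (t : ℝ), a0 ≤ a x t ∧ a x t ≤ β)
    (hsd : s ≤ a0 * d / (2 * β))
    (v : EuclideanSpace ℝ (Fin d) → ℝ → ℝ)
    (hcont : Continuous (fun p : EuclideanSpace ℝ (Fin d) × ℝ => v p.1 p.2))
    (hx2 : ∀ t ∈ Set.Icc 0 T, ContDiff ℝ 2 (fun y => v y t))
    (ht1 : ∀ (x : EuclideanSpace ℝ (Fin d)), ∀ t ∈ Set.Icc 0 T,
      DifferentiableAt ℝ (fun s' => v x s') t)
    (Mv : ℝ) (hbdd : ∀ (x : EuclideanSpace ℝ (Fin d)), ∀ t ∈ Set.Icc 0 T, |v x t| ≤ Mv)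
    (hL : ∀ (x : EuclideanSpace ℝ (Fin d)), ∀ t ∈ Set.Icc 0 T,
      dt v x t - a x t * lap (fun y => v y t) x ≤ 0)
    (hinit : ∀ x : EuclideanSpace ℝ (Fin d), v x 0 ≤ F x 0) :
    ∀ (x : EuclideanSpace ℝ (Fin d)), ∀ t ∈ Set.Icc 0 T, v x t ≤ F x t := by
  obtain rfl : F = gaussianBarrier s β := funext fun x => funext (hF x)
  have hIcc : Icc (0 : ℝ) T ⊆ Ioi (-1) := fun t ht => by simp only [mem_Ioi]; linarith [ht.1]
  have hIoc : Ioc (0 : ℝ) T ⊆ Icc 0 T := Ioc_subset_Icc_self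
  have hs (x : EuclideanSpace ℝ (Fin d)) (t : ℝ) : s ≤ a x t * d / (2 * β) :=
    hsd.trans (by gcongr; exact (ha x t).1)
  have hpenalized (ε : ℝ) (hε : 0 < ε) :
      ∀ x, ∀ t ∈ Icc 0 T, v x t ≤ penalizedBarrier s β ε x t :=
    le_of_strict_supersolution (a := a) (R := sqrt (Mv / ε))
      (hcont.continuousOn.sub ((continuousOn_penalizedBarrier hβ.ne').mono
        (prod_mono subset_rfl hIcc)))
      (fun t ht => hx2 t (hIoc ht)) (fun t _ => contDiff_penalizedBarrier t)
      (fun x t ht => ht1 x t (hIoc ht))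
      (fun x t ht => (hasDerivAt_penalizedBarrier_time x (hIcc (hIoc ht))).differentiableAt)
      (fun x t _ => ha0.le.trans (ha x t).1) (fun x t ht => hL x t (hIoc ht))
      (fun x t ht => dt_sub_mul_lap_penalizedBarrier_pos hβ hε (hIcc (hIoc ht)) (ha x t).2
        (hs x t) x)
      (fun x => (hinit x).trans (gaussianBarrier_le_penalizedBarrier hβ.le hε.le le_rfl x))
      (fun x t ht hR => ((le_abs_self _).trans (hbdd x t ht)).trans
        (lt_penalizedBarrier_of_sqrt_lt_norm hβ.le hε ht.1 hR).le)
  intro x t ht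
  exact ge_of_tendsto ((tendsto_penalizedBarrier x t).mono_left (nhdsWithin_le_nhds (s := Ioi 0)))
    (eventually_nhdsWithin_of_forall fun ε hε => hpenalized ε hε x t ht)

theorem stmt_11 (d : ℕ) (T : ℝ) (hT : 0 < T)
    (s β : ℝ) (hs : 0 < s) (hβ : 0 < β)
    (F : EuclideanSpace ℝ (Fin d) → ℝ → ℝ)
    (hF : ∀ x t, F x t = (t + 1) ^ (-s) * Real.exp (-‖x‖ ^ 2 / (4 * β * (t + 1))))
    (a : EuclideanSpace ℝ (Fin d) → ℝ → ℝ) (a0 : ℝ) (ha0 : 0 < a0)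
    (ha : ∀ (x : EuclideanSpace ℝ (Fin d)) (t : ℝ), a0 ≤ a x t ∧ a x t ≤ β)
    (hsd : s ≤ a0 * d / (2 * β))
    (v : EuclideanSpace ℝ (Fin d) → ℝ → ℝ)
    (hcont : Continuous (fun p : EuclideanSpace ℝ (Fin d) × ℝ => v p.1 p.2))
    (hx2 : ∀ t ∈ Set.Icc 0 T, ContDiff ℝ 2 (fun y => v y t))
    (ht1 : ∀ (x : EuclideanSpace ℝ (Fin d)), ∀ t ∈ Set.Icc 0 T,
      DifferentiableAt ℝ (fun s' => v x s') t)
    (Mv : ℝ) (hbdd : ∀ (x : EuclideanSpace ℝ (Fin d)), ∀ t ∈ Set.Icc 0 T, |v x t| ≤ Mv)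
    (hL : ∀ (x : EuclideanSpace ℝ (Fin d)), ∀ t ∈ Set.Icc 0 T,
      dt v x t - a x t * lap (fun y => v y t) x ≤ 0)
    (hinit : ∀ x : EuclideanSpace ℝ (Fin d), v x 0 ≤ F x 0) :
    ∀ (x : EuclideanSpace ℝ (Fin d)), ∀ t ∈ Set.Icc 0 T, v x t ≤ F x t :=
  stmt_11_general d T s β hβ F hF a a0 ha0 ha hsd v hcont hx2 ht1 Mv hbdd hL hinit
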